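/- For every integer m ≥ 2, the quantity √(2π)·χ_m^{++}(0) := ∫_0^∞ ∫_0^∞ exp(−(x+y)²/2)·exp(−(2m−2)·x·y) dx dy equals (2√(m(m−1)))^{−1}·log(2m − 1 + 2√(m(m−1))), which lies in (0,1). -/

import Mathlib

open Real MeasureTheory Set Filter Topology

/-! With `a = 2m - 1` the integrand is `exp (-(x² + 2axy + y²)/2)`. Substituting `y = xu` and
swapping the order of integration, the `x`-integral `∫ x exp (-(u² + 2au + 1) x²/2) dx` is
elementary and equals `(u² + 2au + 1)⁻¹`. The roots of `u² + 2au + 1` are `-(a ± √(a² - 1))`,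
with product `1`, so partial fractions give `∫₀^∞ du / (u² + 2au + 1) = arcosh a / √(a² - 1)`,
where `arcosh a = log (a + √(a² - 1))` and `√(a² - 1) = 2√(m(m - 1))`. The bound by `1` is
`t < sinh t` at `t = arcosh a > 0`. -/

lemma integral_Ioi_mul_exp_neg_mul_sq {c : ℝ} (hc : 0 < c) :
    ∫ x in Ioi (0 : ℝ), x * exp (-c * x ^ 2) = (2 * c)⁻¹ := by
  apply Complex.ofReal_injective
  rw [← integral_complex_ofReal]
  push_cast
  exact integral_mul_cexp_neg_mul_sq (by simpa using hc)

lemma integral_Ioi_inv_add_sub_inv_add {p q : ℝ} (hp : 0 < p) (hpq : p ≤ q) :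
    ∫ u in Ioi (0 : ℝ), ((u + p)⁻¹ - (u + q)⁻¹) = log q - log p := by
  have hderiv : ∀ u ∈ Ici (0 : ℝ),
      HasDerivAt (fun u => log (u + p) - log (u + q)) ((u + p)⁻¹ - (u + q)⁻¹) u := by
    intro u (hu : 0 ≤ u)
    have hlog {r : ℝ} (hr : 0 < r) : HasDerivAt (fun u => log (u + r)) (u + r)⁻¹ u := by
      simpa using ((hasDerivAt_id u).add_const r).log (by positivity)
    exact (hlog hp).sub (hlog (hp.trans_le hpq))
  have hnonneg : ∀ u ∈ Ioi (0 : ℝ), 0 ≤ (u + p)⁻¹ - (u + q)⁻¹ := fun u (hu : 0 < u) =>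
    sub_nonneg.2 (inv_anti₀ (by positivity) (by linarith))
  have hlim : Tendsto (fun u => log (u + p) - log (u + q)) atTop (𝓝 0) := by
    simpa using (tendsto_log_comp_add_sub_log p).sub (tendsto_log_comp_add_sub_log q)
  rw [integral_Ioi_of_hasDerivAt_of_nonneg' hderiv hnonneg hlim]
  simp

lemma integral_Ioi_inv_sq_add_two_mul_add_one {a : ℝ} (ha : 1 < a) :
    ∫ u in Ioi (0 : ℝ), (u ^ 2 + 2 * a * u + 1)⁻¹ = arcosh a / √(a ^ 2 - 1) := by
  set b := √(a ^ 2 - 1)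
  have hb : 0 < b := sqrt_pos.2 (by nlinarith)
  have hb2 : b ^ 2 = a ^ 2 - 1 := sq_sqrt (by nlinarith)
  have hinv : a - b = (a + b)⁻¹ := (add_sqrt_self_sq_sub_one_inv ha.le).symm
  have hab : 0 < a - b := by rw [hinv]; positivity
  have hsplit : ∀ u ∈ Ioi (0 : ℝ),
      (u ^ 2 + 2 * a * u + 1)⁻¹ = (2 * b)⁻¹ * ((u + (a - b))⁻¹ - (u + (a + b))⁻¹) := by
    intro u (hu : 0 < u)
    have h1 : u + (a - b) ≠ 0 := by linarith
    have h2 : u + (a + b) ≠ 0 := by linarith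
    have h3 : u ^ 2 + 2 * a * u + 1 ≠ 0 := by nlinarith
    field_simp
    nlinarith
  rw [setIntegral_congr_fun measurableSet_Ioi hsplit, integral_const_mul,
    integral_Ioi_inv_add_sub_inv_add hab (by linarith), hinv, log_inv, arcosh]
  ring

lemma integrableOn_Ioi_inv_sq_add_two_mul_add_one {a : ℝ} (ha : 0 ≤ a) :
    IntegrableOn (fun u : ℝ => (u ^ 2 + 2 * a * u + 1)⁻¹) (Ioi 0) := by
  refine integrable_inv_one_add_sq.integrableOn.mono' ?_ ?_
  · refine ContinuousOn.aestronglyMeasurable ?_ measurableSet_Ioi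
    exact ContinuousOn.inv₀ (by fun_prop) fun u (hu : 0 < u) => by positivity
  · filter_upwards [ae_restrict_mem measurableSet_Ioi] with u (hu : 0 < u)
    rw [norm_of_nonneg (by positivity)]
    exact inv_anti₀ (by positivity) (by nlinarith)

lemma integral_Ioi_exp_neg_quadratic_eq {a x : ℝ} (hx : 0 < x) :
    ∫ y in Ioi (0 : ℝ), exp (-(x ^ 2 + 2 * a * x * y + y ^ 2) / 2)
      = ∫ u in Ioi (0 : ℝ), x * exp (-((u ^ 2 + 2 * a * u + 1) / 2) * x ^ 2) := by
  have h := integral_comp_mul_left_Ioi'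
    (fun y => exp (-(x ^ 2 + 2 * a * x * y + y ^ 2) / 2)) 0 hx
  rw [mul_zero, smul_eq_mul] at h
  rw [← h, integral_const_mul]
  congr 2 with u
  ring_nf

lemma integrable_mul_exp_neg_quadratic_mul_sq {a : ℝ} (ha : 0 ≤ a) :
    Integrable (fun p : ℝ × ℝ => p.1 * exp (-((p.2 ^ 2 + 2 * a * p.2 + 1) / 2) * p.1 ^ 2))
      ((volume.restrict (Ioi 0)).prod (volume.restrict (Ioi 0))) := by
  have hc : ∀ u ∈ Ioi (0 : ℝ), 0 < (u ^ 2 + 2 * a * u + 1) / 2 := fun u (hu : 0 < u) => by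
    positivity
  refine (integrable_prod_iff' (by fun_prop)).2 ⟨?_, ?_⟩
  · filter_upwards [ae_restrict_mem measurableSet_Ioi] with u hu
    exact (integrable_mul_exp_neg_mul_sq (hc u hu)).integrableOn
  · refine (integrableOn_Ioi_inv_sq_add_two_mul_add_one ha).congr_fun (fun u hu => ?_)
      measurableSet_Ioi
    rw [← setIntegral_congr_fun measurableSet_Ioi fun x (hx : 0 < x) =>
      (norm_of_nonneg (by positivity)).symm, integral_Ioi_mul_exp_neg_mul_sq (hc u hu)]
    field_simp

lemma integral_Ioi_integral_Ioi_exp_neg_quadratic {a : ℝ} (ha : 0 ≤ a) :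
    ∫ x in Ioi (0 : ℝ), ∫ y in Ioi (0 : ℝ), exp (-(x ^ 2 + 2 * a * x * y + y ^ 2) / 2)
      = ∫ u in Ioi (0 : ℝ), (u ^ 2 + 2 * a * u + 1)⁻¹ := by
  calc _ = ∫ x in Ioi (0 : ℝ), ∫ u in Ioi (0 : ℝ),
        x * exp (-((u ^ 2 + 2 * a * u + 1) / 2) * x ^ 2) :=
      setIntegral_congr_fun measurableSet_Ioi fun x hx => integral_Ioi_exp_neg_quadratic_eq hx
    _ = ∫ u in Ioi (0 : ℝ), ∫ x in Ioi (0 : ℝ),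
        x * exp (-((u ^ 2 + 2 * a * u + 1) / 2) * x ^ 2) :=
      integral_integral_swap (integrable_mul_exp_neg_quadratic_mul_sq ha)
    _ = _ := setIntegral_congr_fun measurableSet_Ioi fun u (hu : 0 < u) => by
      rw [integral_Ioi_mul_exp_neg_mul_sq (by positivity)]
      field_simp

lemma arcosh_div_sqrt_sq_sub_one_mem_Ioo {a : ℝ} (ha : 1 < a) :
    arcosh a / √(a ^ 2 - 1) ∈ Ioo 0 1 := by
  have hpos := arcosh_pos ha
  have hsinh : arcosh a < √(a ^ 2 - 1) := sinh_arcosh ha.le ▸ self_lt_sinh_iff.2 hpos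
  exact ⟨div_pos hpos (hpos.trans hsinh), (div_lt_one (hpos.trans hsinh)).2 hsinh⟩

theorem chi_pp_zero_value (m : ℕ) (hm : 2 ≤ m) :
    (∫ x in Ioi (0 : ℝ), ∫ y in Ioi (0 : ℝ),
        Real.exp (-(x + y) ^ 2 / 2) * Real.exp (-((2 : ℝ) * m - 2) * x * y))
      = (2 * Real.sqrt ((m : ℝ) * ((m : ℝ) - 1)))⁻¹ *
          Real.log (2 * (m : ℝ) - 1 + 2 * Real.sqrt ((m : ℝ) * ((m : ℝ) - 1))) ∧
    (∫ x in Ioi (0 : ℝ), ∫ y in Ioi (0 : ℝ),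
        Real.exp (-(x + y) ^ 2 / 2) * Real.exp (-((2 : ℝ) * m - 2) * x * y))
      ∈ Set.Ioo (0 : ℝ) 1 := by
  set a : ℝ := 2 * m - 1
  have ha : 1 < a := by
    have : (2 : ℝ) ≤ m := by exact_mod_cast hm
    linarith
  have hsqrt : √(a ^ 2 - 1) = 2 * √(m * (m - 1)) := by
    rw [show a ^ 2 - 1 = 2 ^ 2 * (m * (m - 1)) by ring, sqrt_mul (by norm_num), sqrt_sq zero_le_two]
  have hintegrand : ∀ x y : ℝ, exp (-(x + y) ^ 2 / 2) * exp (-(2 * m - 2) * x * y)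
      = exp (-(x ^ 2 + 2 * a * x * y + y ^ 2) / 2) := fun x y => by
    rw [← exp_add]
    congr 1
    ring
  have hvalue : ∫ x in Ioi (0 : ℝ), ∫ y in Ioi (0 : ℝ),
      exp (-(x + y) ^ 2 / 2) * exp (-(2 * m - 2) * x * y) = arcosh a / √(a ^ 2 - 1) := by
    simp_rw [hintegrand]
    rw [integral_Ioi_integral_Ioi_exp_neg_quadratic (by linarith),
      integral_Ioi_inv_sq_add_two_mul_add_one ha]
  rw [hvalue]
  refine ⟨?_, arcosh_div_sqrt_sq_sub_one_mem_Ioo ha⟩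
  rw [arcosh, hsqrt, div_eq_inv_mul]
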